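/- Let G be a finite simple connected graph on n ≥ 2 vertices with maximum degree Δ, and let s be a real number with s ≤ 0 or s ≥ 1. Then λ_max(M_G(s)) ≥ (1/2)·( s^2·(Δ - 1) + 2 + |s|·√( s^2·(Δ - 1)^2 + 4Δ ) ). -/
import Mathlib


open scoped Classical
open Matrix Polynomial

/-- The deformed Laplacian matrix `M_G(s) = I - s·A(G) + s²·(D(G) - I)` of a finite
simple graph `G`. -/
noncomputable def deformedLap {V : Type*} [Fintype V] (G : SimpleGraph V) (s : ℝ) :
    Matrix V V ℝ :=
  1 - s • G.adjMatrix ℝ + s ^ 2 • (Matrix.diagonal (fun v => (G.degree v : ℝ)) - 1)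

/-- The largest (real) eigenvalue of a matrix: the supremum of its real spectrum.
For a real symmetric matrix this is the maximal eigenvalue (the paper's `ρ`). -/
noncomputable def lamMax {n : Type*} [Fintype n] (M : Matrix n n ℝ) : ℝ :=
  sSup (spectrum ℝ M)

lemma quadform_le_lamMax {n : Type*} [Fintype n] {M : Matrix n n ℝ}
    (hM : M.IsHermitian) (x : n → ℝ) :
    x ⬝ᵥ (M *ᵥ x) ≤ lamMax M * (x ⬝ᵥ x) := by
  classical
  set U : Matrix n n ℝ := (hM.eigenvectorUnitary : Matrix n n ℝ) with hU
  set μ : n → ℝ := hM.eigenvalues with hμ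
  have hspec : M = U * Matrix.diagonal μ * star U := by simpa using hM.spectral_theorem
  have hUU : U * star U = 1 := Matrix.mem_unitaryGroup_iff.mp hM.eigenvectorUnitary.2
  set y : n → ℝ := star U *ᵥ x with hy
  have hxU : x ᵥ* U = y := by
    have h : star U = Uᵀ := by ext i j; simp [Matrix.star_apply]
    rw [hy, h, Matrix.mulVec_transpose]
  have h1 : x ⬝ᵥ (M *ᵥ x) = ∑ i, μ i * (y i)^2 := by
    rw [hspec, ← Matrix.mulVec_mulVec, ← Matrix.mulVec_mulVec, Matrix.dotProduct_mulVec, hxU,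
      ← hy]
    simp only [dotProduct, Matrix.mulVec_diagonal]
    exact Finset.sum_congr rfl fun i _ => by ring
  have h2 : x ⬝ᵥ x = ∑ i, (y i)^2 := by
    have h : x ⬝ᵥ x = x ⬝ᵥ ((U * star U) *ᵥ x) := by rw [hUU]; simp
    rw [h, ← Matrix.mulVec_mulVec, Matrix.dotProduct_mulVec, hxU, ← hy]
    simp [dotProduct, sq]
  have hb : BddAbove (spectrum ℝ M) := (Matrix.finite_spectrum M).bddAbove
  have hle : ∀ i, μ i ≤ lamMax M := fun i => le_csSup hb (hM.eigenvalues_mem_spectrum_real i)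
  rw [h1, h2, Finset.mul_sum]
  exact Finset.sum_le_sum fun i _ => mul_le_mul_of_nonneg_right (hle i) (sq_nonneg _)

lemma scalar_aux (t R d lam : ℝ) (hd : 1 ≤ d) (ht : 0 ≤ t)
    (hlam : lam = (t^2*(d-1) + 2 + t*R)/2) (hR : R^2 = t^2*(d-1)^2 + 4*d) (hR0 : 0 ≤ R) :
    ∃ a c : ℝ, 0 ≤ a ∧ 0 ≤ c ∧ 0 < a^2 + d*c^2 ∧
      lam * (a^2 + d*c^2) ≤ a^2*(1 + t^2*(d-1)) + d*c^2 + 2*t*d*(a*c) := by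
  rcases eq_or_lt_of_le ht with h0 | htpos
  · refine ⟨1, 0, zero_le_one, le_refl 0, by norm_num, ?_⟩
    rw [hlam, ← h0]; nlinarith
  · have hm : 0 ≤ t*(d-1) := mul_nonneg ht (by linarith)
    have hRm : t*(d-1) ≤ R := by nlinarith
    have hc : 0 ≤ lam - 1 - t^2*(d-1) := by rw [hlam]; nlinarith
    have hprod : (lam - 1)*(lam - 1 - t^2*(d-1)) = t^2*d := by
      have h : (lam-1)*(lam-1-t^2*(d-1)) = (t^2*R^2 - (t^2*(d-1))^2)/4 := by rw [hlam]; ring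
      rw [h, hR]; ring
    refine ⟨t*d, lam - 1 - t^2*(d-1), by positivity, hc, ?_, le_of_eq ?_⟩
    · have h1 : 0 < (t*d)^2 := by positivity
      nlinarith [mul_nonneg (by linarith : (0:ℝ) ≤ d) (sq_nonneg (lam - 1 - t^2*(d-1)))]
    · linear_combination (d*(lam - 1 - t^2*(d-1))) * hprod

lemma sum_split {V : Type*} [Fintype V] (G : SimpleGraph V) (u : V) (a b : ℝ) (x : V → ℝ)
    (hx : ∀ w, x w = (if w = u then a else 0) + (if G.Adj u w then b else 0)) (f : V → ℝ) :
    ∑ w, x w * f w = a * f u + b * ∑ w ∈ G.neighborFinset u, f w := by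
  simp_rw [hx, add_mul, Finset.sum_add_distrib, ite_mul, zero_mul]
  rw [Finset.sum_ite_eq' Finset.univ u (fun w => a * f w),
    SimpleGraph.neighborFinset_eq_filter, ← Finset.sum_filter, Finset.mul_sum]
  simp

lemma sum_over {V : Type*} [Fintype V] (G : SimpleGraph V) (u : V) (a b : ℝ) (x : V → ℝ)
    (hx : ∀ w, x w = (if w = u then a else 0) + (if G.Adj u w then b else 0)) (s : Finset V) :
    ∑ z ∈ s, x z = (if u ∈ s then a else 0) + ((s.filter (G.Adj u)).card : ℝ) * b := by
  simp_rw [hx]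
  rw [Finset.sum_add_distrib, Finset.sum_ite_eq' s u (fun _ => a), ← Finset.sum_filter,
    Finset.sum_const, nsmul_eq_mul]

lemma deformedLap_isHermitian {V : Type*} [Fintype V] (G : SimpleGraph V) (s : ℝ) :
    (deformedLap G s).IsHermitian := by
  unfold deformedLap Matrix.IsHermitian
  ext i j
  simp only [Matrix.conjTranspose_apply, Matrix.add_apply, Matrix.sub_apply, Matrix.smul_apply,
    Matrix.one_apply, Matrix.diagonal_apply, SimpleGraph.adjMatrix_apply, star_trivial,
    smul_eq_mul]
  by_cases h : i = j
  · subst h; simp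
  · simp [h, Ne.symm h, SimpleGraph.adj_comm]

set_option maxHeartbeats 1000000 in
/-- Lower bound for the largest eigenvalue of the deformed Laplacian of a connected
graph in terms of the maximum degree, for `s ≤ 0` or `s ≥ 1`. -/
theorem stmt_3 {V : Type*} [Fintype V] (G : SimpleGraph V) (hconn : G.Connected)
    (hn : 2 ≤ Fintype.card V) (s : ℝ) (hs : s ≤ 0 ∨ 1 ≤ s) :
    (1 / 2) * (s ^ 2 * ((G.maxDegree : ℝ) - 1) + 2
        + |s| * Real.sqrt (s ^ 2 * ((G.maxDegree : ℝ) - 1) ^ 2 + 4 * (G.maxDegree : ℝ)))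
      ≤ lamMax (deformedLap G s) := by
  classical
  have hne : Nonempty V := Fintype.card_pos_iff.mp (by omega)
  obtain ⟨u, hu⟩ := G.exists_maximal_degree_vertex
  have hadj : ∃ w, G.Adj u w := by
    obtain ⟨w, hw⟩ := Fintype.exists_ne_of_one_lt_card (by omega) u
    obtain ⟨p⟩ := hconn u w
    cases p with
    | nil => exact absurd rfl hw
    | cons h _ => exact ⟨_, h⟩
  have hdeg1 : 1 ≤ G.degree u := (G.degree_pos_iff_exists_adj u).mpr hadj
  rw [hu]
  set d : ℝ := (G.degree u : ℝ) with hd_def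
  have hd : 1 ≤ d := by rw [hd_def]; exact_mod_cast hdeg1
  set t : ℝ := |s| with ht_def
  have ht : 0 ≤ t := abs_nonneg s
  have ht2 : t^2 = s^2 := sq_abs s
  set R : ℝ := Real.sqrt (s ^ 2 * (d - 1) ^ 2 + 4 * d) with hR_def
  have hR0 : 0 ≤ R := Real.sqrt_nonneg _
  have hR : R^2 = t^2*(d-1)^2 + 4*d := by
    rw [hR_def, Real.sq_sqrt (by positivity), ht2]
  set lam : ℝ := (t^2*(d-1) + 2 + t*R)/2 with hlam_def
  have hgoal_eq : 1 / 2 * (s ^ 2 * (d - 1) + 2 + t * R) = lam := by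
    rw [hlam_def, ht2]; ring
  rw [hgoal_eq]
  obtain ⟨a, c, ha, hc, hpos, hkey⟩ := scalar_aux t R d lam hd ht rfl hR hR0
  set b : ℝ := if s ≤ 0 then c else -c with hb_def
  have hb2 : b^2 = c^2 := by rw [hb_def]; split <;> ring
  have hab : s*(a*b) = -(t*(a*c)) := by
    rw [hb_def, ht_def]
    rcases le_or_gt s 0 with h | h
    · rw [if_pos h, abs_of_nonpos h]; ring
    · rw [if_neg (not_le.mpr h), abs_of_pos h]; ring
  set x : V → ℝ := fun w => (if w = u then a else 0) + (if G.Adj u w then b else 0) with hx_def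
  have hx : ∀ w, x w = (if w = u then a else 0) + (if G.Adj u w then b else 0) := fun w => rfl
  set N := G.neighborFinset u with hN_def
  have hcard : (N.card : ℝ) = d := by rw [hN_def, G.card_neighborFinset_eq_degree]
  have hxu : x u = a := by rw [hx u]; simp
  set SD : ℝ := ∑ w ∈ N, (G.degree w : ℝ) with hSD_def
  set E : ℝ := ∑ w ∈ N, (((G.neighborFinset w).filter (G.Adj u)).card : ℝ) with hE_def
  have hE0 : 0 ≤ E := Finset.sum_nonneg fun w _ => by positivity
  have hSDE : E ≤ SD - d := by
    have h1 : ∀ w ∈ N, (((G.neighborFinset w).filter (G.Adj u)).card : ℝ)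
        ≤ (G.degree w : ℝ) - 1 := by
      intro w hw
      rw [hN_def, SimpleGraph.mem_neighborFinset] at hw
      have hsub : insert u ((G.neighborFinset w).filter (G.Adj u)) ⊆ G.neighborFinset w :=
        Finset.insert_subset (by rw [SimpleGraph.mem_neighborFinset]; exact hw.symm)
          (Finset.filter_subset _ _)
      have hu_not : u ∉ (G.neighborFinset w).filter (G.Adj u) := by
        simp [SimpleGraph.irrefl]
      have hle := Finset.card_le_card hsub
      rw [Finset.card_insert_of_notMem hu_not] at hle
      have h2 : (((G.neighborFinset w).filter (G.Adj u)).card : ℝ) + 1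
          ≤ ((G.neighborFinset w).card : ℝ) := by exact_mod_cast hle
      rw [← G.card_neighborFinset_eq_degree]
      linarith
    calc E ≤ ∑ w ∈ N, ((G.degree w : ℝ) - 1) := Finset.sum_le_sum h1
      _ = SD - d := by
        rw [Finset.sum_sub_distrib, ← hSD_def, Finset.sum_const, ← hcard]; simp
  have hfilterN : N.filter (G.Adj u) = N := by
    apply Finset.filter_true_of_mem
    intro w hw
    rw [hN_def, SimpleGraph.mem_neighborFinset] at hw
    exact hw
  have huN : u ∉ N := by
    rw [hN_def, SimpleGraph.mem_neighborFinset]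
    exact G.irrefl
  have hsumxN : ∑ w ∈ N, x w = d * b := by
    rw [sum_over G u a b x hx N, if_neg huN, hfilterN, hcard]; ring
  have hS1 : x ⬝ᵥ x = a^2 + d * b^2 := by
    show ∑ w, x w * x w = _
    rw [sum_split G u a b x hx x, hxu, hsumxN]; ring
  have hS2 : x ⬝ᵥ ((Matrix.diagonal (fun v => (G.degree v : ℝ))) *ᵥ x)
      = d * a^2 + b^2 * SD := by
    show ∑ w, x w * ((Matrix.diagonal (fun v => (G.degree v : ℝ))) *ᵥ x) w = _
    simp_rw [Matrix.mulVec_diagonal]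
    rw [sum_split G u a b x hx (fun w => (G.degree w : ℝ) * x w)]
    rw [hxu]
    have h2 : ∑ w ∈ N, (G.degree w : ℝ) * x w = SD * b := by
      rw [hSD_def, Finset.sum_mul]
      refine Finset.sum_congr rfl fun w hw => ?_
      have hw' : G.Adj u w := by rwa [hN_def, SimpleGraph.mem_neighborFinset] at hw
      rw [hx w, if_neg (G.ne_of_adj hw').symm, if_pos hw']
      ring
    rw [h2, ← hd_def]
    ring
  have hS3 : x ⬝ᵥ (G.adjMatrix ℝ *ᵥ x) = 2*a*b*d + b^2 * E := by
    show ∑ w, x w * (G.adjMatrix ℝ *ᵥ x) w = _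
    have hfu : (G.adjMatrix ℝ *ᵥ x) u = d * b := by
      rw [SimpleGraph.adjMatrix_mulVec_apply, ← hN_def, hsumxN]
    have hfw : ∀ w ∈ N, (G.adjMatrix ℝ *ᵥ x) w
        = a + (((G.neighborFinset w).filter (G.Adj u)).card : ℝ) * b := by
      intro w hw
      rw [hN_def, SimpleGraph.mem_neighborFinset] at hw
      rw [SimpleGraph.adjMatrix_mulVec_apply, sum_over G u a b x hx (G.neighborFinset w),
        if_pos (by rw [SimpleGraph.mem_neighborFinset]; exact hw.symm : u ∈ G.neighborFinset w)]
    rw [sum_split G u a b x hx (fun w => (G.adjMatrix ℝ *ᵥ x) w)]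
    rw [hfu]
    have h2 : ∑ w ∈ N, (G.adjMatrix ℝ *ᵥ x) w = d * a + E * b := by
      rw [Finset.sum_congr rfl hfw, Finset.sum_add_distrib, Finset.sum_const, nsmul_eq_mul,
        hcard, hE_def, Finset.sum_mul]
    rw [h2]
    ring
  have hQ : x ⬝ᵥ (deformedLap G s *ᵥ x)
      = (x ⬝ᵥ x) - s * (x ⬝ᵥ (G.adjMatrix ℝ *ᵥ x))
        + s^2 * ((x ⬝ᵥ ((Matrix.diagonal (fun v => (G.degree v : ℝ))) *ᵥ x)) - (x ⬝ᵥ x)) := by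
    simp [deformedLap, Matrix.add_mulVec, Matrix.sub_mulVec, Matrix.smul_mulVec,
      Matrix.one_mulVec, dotProduct_add, dotProduct_sub, dotProduct_smul,
      smul_eq_mul, mul_sub]
  have hQval : x ⬝ᵥ (deformedLap G s *ᵥ x)
      = a^2*(1 + t^2*(d-1)) + d*c^2 + 2*t*d*(a*c)
        + ((s^2 - s)*E*c^2 + s^2*((SD - d) - E)*c^2) := by
    rw [hQ, hS1, hS2, hS3]
    linear_combination (d - s*E + s^2*(SD - d)) * hb2 + (-2*d) * hab + (-(a^2*(d-1))) * ht2
  have key1 : 0 ≤ (s^2 - s)*E*c^2 := by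
    have hss : 0 ≤ s^2 - s := by rcases hs with h | h <;> nlinarith
    exact mul_nonneg (mul_nonneg hss hE0) (sq_nonneg c)
  have key2 : 0 ≤ s^2*((SD - d) - E)*c^2 :=
    mul_nonneg (mul_nonneg (sq_nonneg s) (by linarith)) (sq_nonneg c)
  have hray := quadform_le_lamMax (deformedLap_isHermitian G s) x
  rw [hQval, hS1] at hray
  have hxx : a^2 + d * b^2 = a^2 + d*c^2 := by rw [hb2]
  rw [hxx] at hray
  have hfinal : lam * (a^2 + d*c^2) ≤ lamMax (deformedLap G s) * (a^2 + d*c^2) := by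
    linarith
  exact le_of_mul_le_mul_right hfinal hpos
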